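/- For every n with 1 ≤ n ≤ N_S, there exists a unitary matrix Θ ∈ ℂ^{N_S×N_S} (of the form Θ = V_B·P·U_Fᴴ, where V_B and U_F are right and left singular-vector matrices of H_B and H_F respectively and P is a permutation matrix) such that σ_n(H_B·Θ·H_F) = min over pairs (i,j) ∈ {1,…,N_S}² with i+j = n+1 of σ_i(H_B)·σ_j(H_F). -/

import Mathlib

/-!
Take `Θ = V_B P U_Fᴴ` with `P` the permutation matrix of `π`. Then
`H_B Θ H_F = U_B (Σ_B P Σ_F) V_Fᴴ` and `(Σ_B P Σ_F)(Σ_B P Σ_F)ᴴ` is diagonal, so the singular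
values of `H_B Θ H_F` are the products `σ_k(H_B) σ_(π k)(H_F)`; here `σ_k(H_F) = 0` for `k > N_T`
because `H_F` has rank at most `N_T`. If `π` reverses `1, …, n` and fixes the other indices, the
first `n` products are exactly the `σ_i(H_B) σ_j(H_F)` with `i + j = n + 1`, while each later one,
`σ_k(H_B) σ_k(H_F)` with `k > n`, is at most any of them by monotonicity. Hence the `n`-th largest
product is the smallest of the first `n`.
-/

open Matrix

noncomputable def nthLargest {m : ℕ} (f : Fin m → ℝ) (n : ℕ) : ℝ :=
  if h : 1 ≤ n ∧ n ≤ m then (f ∘ Tuple.sort f) ⟨m - n, by omega⟩ else 0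

noncomputable def nthEig {m : ℕ} (Y : Matrix (Fin m) (Fin m) ℂ) (hY : Y.IsHermitian) (n : ℕ) : ℝ :=
  nthLargest hY.eigenvalues n

/-- The `n`-th largest singular value (1-based) of a complex matrix, equal to the square root
of the `n`-th largest eigenvalue of `A * Aᴴ`, with the convention that it is `0` whenever
`n` exceeds the matrix dimensions. -/
noncomputable def singVal {r c : ℕ} (A : Matrix (Fin r) (Fin c) ℂ) (n : ℕ) : ℝ :=
  Real.sqrt (nthLargest (Matrix.isHermitian_mul_conjTranspose_self A).eigenvalues n)

open Finset

section NthLargest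

variable {m : ℕ}

lemma nthLargest_congr {f g : Fin m → ℝ} (h : univ.val.map f = univ.val.map g) (n : ℕ) :
    nthLargest f n = nthLargest g n := by
  have hsorted : f ∘ Tuple.sort f = g ∘ Tuple.sort g := by
    refine List.ofFn_injective (List.Perm.eq_of_sortedLE (Tuple.monotone_sort f).sortedLE_ofFn
      (Tuple.monotone_sort g).sortedLE_ofFn ?_)
    rw [Fin.univ_val_map, Fin.univ_val_map, Multiset.coe_eq_coe] at h
    exact ((Tuple.sort f).ofFn_comp_perm f).trans (h.trans ((Tuple.sort g).ofFn_comp_perm g).symm)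
  simp only [nthLargest, hsorted]

lemma nthLargest_nonneg {f : Fin m → ℝ} (hf : ∀ i, 0 ≤ f i) (n : ℕ) : 0 ≤ nthLargest f n := by
  unfold nthLargest
  split_ifs
  exacts [hf _, le_rfl]

lemma nthLargest_antitoneOn {f : Fin m → ℝ} (hf : ∀ i, 0 ≤ f i) :
    AntitoneOn (nthLargest f) (Set.Ici 1) := by
  intro k hk l _ hkl
  by_cases hl : 1 ≤ l ∧ l ≤ m
  · rw [nthLargest, dif_pos hl, nthLargest, dif_pos ⟨hk, hkl.trans hl.2⟩]
    exact Tuple.monotone_sort f (Fin.mk_le_mk.mpr (by omega))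
  · rw [nthLargest, dif_neg hl]
    exact nthLargest_nonneg hf k

lemma nthLargest_eq_of_card {f : Fin m → ℝ} {a : ℝ} {n : ℕ} (hn : 1 ≤ n) (hnm : n ≤ m)
    (hge : n ≤ #{i | a ≤ f i}) (hgt : #{i | a < f i} < n) : nthLargest f n = a := by
  rw [nthLargest, dif_pos ⟨hn, hnm⟩]
  set σ := Tuple.sort f
  have hmono : Monotone (f ∘ σ) := Tuple.monotone_sort f
  have hcard (p : ℝ → Prop) [DecidablePred p] : #{i | p (f (σ i))} = #{i | p (f i)} :=
    card_bij' (fun i _ => σ i) (fun i _ => σ.symm i) (by simp) (by simp) (by simp) (by simp)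
  set j : Fin m := ⟨m - n, by omega⟩
  have hj : (j : ℕ) = m - n := rfl
  apply le_antisymm
  · by_contra! hlt
    have : Ici j ⊆ ({i | a < f (σ i)} : Finset _) := fun i hi =>
      mem_filter.mpr ⟨mem_univ _, hlt.trans_le (hmono (mem_Ici.mp hi))⟩
    have := card_le_card this
    rw [Fin.card_Ici, hcard (a < ·)] at this
    omega
  · by_contra! hlt
    have : ({i | a ≤ f (σ i)} : Finset _) ⊆ Ioi j := fun i hi =>
      mem_Ioi.mpr <| lt_of_not_ge fun hij => (hlt.trans_le' (hmono hij)).not_ge (mem_filter.mp hi).2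
    have := card_le_card this
    rw [Fin.card_Ioi, hcard (a ≤ ·)] at this
    omega

lemma nthLargest_eq_zero_of_card_ne_zero_lt {f : Fin m → ℝ} (hf : ∀ i, 0 ≤ f i) {n : ℕ}
    (hn : #{i | f i ≠ 0} < n) : nthLargest f n = 0 := by
  by_cases hnm : n ≤ m
  · refine nthLargest_eq_of_card (by omega) hnm ?_ ?_
    · simpa [hf] using hnm
    · simpa only [lt_iff_le_and_ne, hf, true_and, ne_comm] using hn
  · rw [nthLargest, dif_neg (by omega)]

lemma nthLargest_eq_of_mem_of_forall {f : Fin m → ℝ} {a : ℝ} {n : ℕ} {s : Finset (Fin m)}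
    (hs : #s = n) {i₀ : Fin m} (hi₀ : i₀ ∈ s) (hfi₀ : f i₀ = a) (hge : ∀ i ∈ s, a ≤ f i)
    (hle : ∀ i ∉ s, f i ≤ a) : nthLargest f n = a := by
  subst hs
  refine nthLargest_eq_of_card (card_pos.mpr ⟨i₀, hi₀⟩)
    ((card_le_univ s).trans_eq (Fintype.card_fin m)) ?_ ?_
  · exact card_le_card fun i hi => mem_filter.mpr ⟨mem_univ _, hge i hi⟩
  · calc #{i | a < f i} ≤ #(s.erase i₀) := card_le_card fun i hi => by
          have hi := (mem_filter.mp hi).2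
          refine mem_erase.mpr ⟨fun h => (h ▸ hfi₀ ▸ hi).false, ?_⟩
          by_contra his
          exact (hle i his).not_gt hi
      _ < #s := card_erase_lt_of_mem hi₀

end NthLargest

open Polynomial in
lemma Matrix.IsHermitian.map_eigenvalues_eq {𝕜 n : Type*} [RCLike 𝕜] [Fintype n] [DecidableEq n]
    {A U : Matrix n n 𝕜} (hA : A.IsHermitian) (hU : Uᴴ * U = 1) {d : n → ℝ}
    (h : A = U * diagonal (fun i => (d i : 𝕜)) * Uᴴ) :
    univ.val.map hA.eigenvalues = univ.val.map d := by
  have hchar : A.charpoly = ∏ i, (X - C (d i : 𝕜)) := by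
    rw [h, Matrix.mul_assoc, charpoly_mul_comm, Matrix.mul_assoc, hU, Matrix.mul_one,
      charpoly_diagonal]
  have hroots := congrArg roots (hA.charpoly_eq.symm.trans hchar)
  rw [roots_prod _ _ (prod_ne_zero_iff.mpr fun i _ => X_sub_C_ne_zero _),
    roots_prod _ _ (prod_ne_zero_iff.mpr fun i _ => X_sub_C_ne_zero _)] at hroots
  simp only [roots_X_sub_C, Multiset.bind_singleton] at hroots
  exact Multiset.map_injective RCLike.ofReal_injective (by simpa [Multiset.map_map] using hroots)

/-- The factor `Σ` of a singular value decomposition `U Σ Vᴴ` with diagonal `s 1, s 2, …`. -/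
def rectDiag (r c : ℕ) (s : ℕ → ℝ) : Matrix (Fin r) (Fin c) ℂ :=
  of fun i j => if (i : ℕ) = j then (s (i + 1) : ℂ) else 0

lemma rectDiag_mul_diagonal_mul_conjTranspose {r c : ℕ} {s : ℕ → ℝ}
    (hs : ∀ k, c ≤ k → s (k + 1) = 0) (g : ℕ → ℝ) :
    rectDiag r c s * diagonal (fun k : Fin c => (g k : ℂ)) * (rectDiag r c s)ᴴ =
      diagonal (fun i : Fin r => ((s (i + 1) ^ 2 * g i : ℝ) : ℂ)) := by
  ext i i'
  rw [mul_apply]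
  simp only [mul_diagonal, rectDiag, diagonal_apply, conjTranspose_apply, of_apply]
  by_cases hic : (i : ℕ) < c
  · rw [sum_eq_single ⟨i, hic⟩ (fun j _ hj => by simp [Ne.symm (Fin.val_ne_of_ne hj)])
      (by simp)]
    rcases eq_or_ne i i' with rfl | hne
    · simp only [if_true, Complex.star_def, Complex.conj_ofReal]
      push_cast
      ring
    · simp [hne, Fin.val_ne_of_ne hne.symm]
  · simp [hs i (not_lt.mp hic)]


lemma Matrix.permMatrix_mul_diagonal_mul_conjTranspose {n R : Type*} [Fintype n] [DecidableEq n]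
    [CommSemiring R] [StarRing R] (e : Equiv.Perm n) (d : n → R) :
    e.permMatrix R * diagonal d * (e.permMatrix R)ᴴ = diagonal (d ∘ e) := by
  rw [conjTranspose_permMatrix, PEquiv.toMatrix_toPEquiv_mul, PEquiv.mul_toMatrix_toPEquiv,
    submatrix_submatrix]
  exact submatrix_diagonal_equiv d e

lemma Matrix.permMatrix_mem_unitaryGroup {n R : Type*} [Fintype n] [DecidableEq n]
    [CommRing R] [StarRing R] (e : Equiv.Perm n) : e.permMatrix R ∈ unitaryGroup n R := by
  rw [mem_unitaryGroup_iff', star_eq_conjTranspose, conjTranspose_permMatrix, ← permMatrix_mul,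
    mul_inv_cancel, permMatrix_one]

lemma Matrix.mul_conjTranspose_eq_of_eq_mul_mul {m n R : Type*} [Fintype m] [Fintype n]
    [DecidableEq n] [CommSemiring R] [StarRing R] {A S : Matrix m n R} {U : Matrix m m R}
    {V : Matrix n n R} (hV : Vᴴ * V = 1) (h : A = U * S * Vᴴ) :
    A * Aᴴ = U * (S * Sᴴ) * Uᴴ := by
  simp only [h, conjTranspose_mul, conjTranspose_conjTranspose, Matrix.mul_assoc]
  rw [← Matrix.mul_assoc Vᴴ, hV, Matrix.one_mul]

def revPrefix (n k : ℕ) : ℕ := if k < n then n - 1 - k else k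

lemma revPrefix_of_lt {n k : ℕ} (h : k < n) : revPrefix n k = n - 1 - k := if_pos h

lemma revPrefix_of_le {n k : ℕ} (h : n ≤ k) : revPrefix n k = k := if_neg (not_lt.mpr h)

lemma revPrefix_involutive (n : ℕ) : Function.Involutive (revPrefix n) := by
  intro k
  unfold revPrefix
  split_ifs <;> omega

lemma revPrefix_lt {n N k : ℕ} (hn : n ≤ N) (hk : k < N) : revPrefix n k < N := by
  unfold revPrefix
  split_ifs <;> omega

def revPrefixPerm {n N : ℕ} (hn : n ≤ N) : Equiv.Perm (Fin N) :=
  Function.Involutive.toPerm (fun k => ⟨revPrefix n k, revPrefix_lt hn k.2⟩)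
    fun k => Fin.ext (revPrefix_involutive n k)

lemma revPrefixPerm_apply_val {n N : ℕ} (hn : n ≤ N) (k : Fin N) :
    (revPrefixPerm hn k : ℕ) = revPrefix n k := rfl

section SingVal

open scoped ComplexOrder

variable {r c : ℕ} (A : Matrix (Fin r) (Fin c) ℂ)

lemma singVal_nonneg (k : ℕ) : 0 ≤ singVal A k := Real.sqrt_nonneg _

lemma eigenvalues_mul_conjTranspose_self_nonneg (i : Fin r) :
    0 ≤ (isHermitian_mul_conjTranspose_self A).eigenvalues i :=
  (posSemidef_self_mul_conjTranspose A).eigenvalues_nonneg i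

lemma singVal_antitoneOn : AntitoneOn (singVal A) (Set.Ici 1) := fun _ hk _ hl hkl =>
  Real.sqrt_le_sqrt (nthLargest_antitoneOn (eigenvalues_mul_conjTranspose_self_nonneg A) hk hl hkl)

lemma singVal_eq_zero_of_rows_lt {k : ℕ} (hk : r < k) : singVal A k = 0 := by
  rw [singVal, nthLargest, dif_neg (by omega), Real.sqrt_zero]

lemma singVal_eq_zero_of_cols_lt {k : ℕ} (hk : c < k) : singVal A k = 0 := by
  have hA := isHermitian_mul_conjTranspose_self A
  rw [singVal, Real.sqrt_eq_zero_of_nonpos (nthLargest_eq_zero_of_card_ne_zero_lt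
    (eigenvalues_mul_conjTranspose_self_nonneg A) ?_).le]
  calc #{i | hA.eigenvalues i ≠ 0} = (A * Aᴴ).rank := by
        rw [hA.rank_eq_card_non_zero_eigs, Fintype.card_subtype]
    _ = A.rank := rank_self_mul_conjTranspose A
    _ ≤ c := rank_le_width A
    _ < k := hk

lemma singVal_eq_sqrt_nthLargest {U : Matrix (Fin r) (Fin r) ℂ} (hU : Uᴴ * U = 1) {d : Fin r → ℝ}
    (h : A * Aᴴ = U * diagonal (fun i => (d i : ℂ)) * Uᴴ) (k : ℕ) :
    singVal A k = √(nthLargest d k) :=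
  congrArg _ (nthLargest_congr ((isHermitian_mul_conjTranspose_self A).map_eigenvalues_eq hU h) k)

end SingVal

lemma rectDiag_mul_conjTranspose {r c : ℕ} {s : ℕ → ℝ} (hs : ∀ k, c ≤ k → s (k + 1) = 0) :
    rectDiag r c s * (rectDiag r c s)ᴴ = diagonal (fun i : Fin r => ((s (i + 1) ^ 2 : ℝ) : ℂ)) := by
  simpa using rectDiag_mul_diagonal_mul_conjTranspose (r := r) hs (fun _ => 1)

lemma gram_rectDiag_mul_permMatrix_mul_rectDiag {r c t : ℕ} {b f : ℕ → ℝ}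
    (hb : ∀ k, c ≤ k → b (k + 1) = 0) (hf : ∀ k, t ≤ k → f (k + 1) = 0)
    (e : Equiv.Perm (Fin c)) {π : ℕ → ℕ} (he : ∀ k, (e k : ℕ) = π k) :
    rectDiag r c b * e.permMatrix ℂ * rectDiag c t f *
        (rectDiag r c b * e.permMatrix ℂ * rectDiag c t f)ᴴ =
      diagonal (fun i : Fin r => (((b (i + 1) * f (π i + 1)) ^ 2 : ℝ) : ℂ)) := by
  have hinner : e.permMatrix ℂ * (rectDiag c t f * (rectDiag c t f)ᴴ) * (e.permMatrix ℂ)ᴴ =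
      diagonal (fun k : Fin c => ((f (π k + 1) ^ 2 : ℝ) : ℂ)) := by
    rw [rectDiag_mul_conjTranspose hf, permMatrix_mul_diagonal_mul_conjTranspose]
    simp only [Function.comp_def, he]
  calc _ = rectDiag r c b * (e.permMatrix ℂ * (rectDiag c t f * (rectDiag c t f)ᴴ) *
        (e.permMatrix ℂ)ᴴ) * (rectDiag r c b)ᴴ := by
        simp only [conjTranspose_mul, Matrix.mul_assoc]
    _ = _ := by
        rw [hinner, rectDiag_mul_diagonal_mul_conjTranspose hb (fun k => f (π k + 1) ^ 2)]
        simp only [mul_pow]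

lemma nthLargest_sq_mul_revPrefix {N n i₀ : ℕ} {b f : ℕ → ℝ} (hb : AntitoneOn b (Set.Ici 1))
    (hf : AntitoneOn f (Set.Ici 1)) (hb0 : ∀ k, 0 ≤ b k) (hf0 : ∀ k, 0 ≤ f k)
    (hbN : ∀ k, N < k → b k = 0) (hi₀ : i₀ ∈ Icc 1 n)
    (hmin : ∀ i ∈ Icc 1 n, b i₀ * f (n + 1 - i₀) ≤ b i * f (n + 1 - i)) :
    nthLargest (fun k : Fin N => (b (k + 1) * f (revPrefix n k + 1)) ^ 2) n =
      (b i₀ * f (n + 1 - i₀)) ^ 2 := by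
  obtain ⟨hi₀1, hi₀n⟩ := mem_Icc.mp hi₀
  have hm0 : 0 ≤ b i₀ * f (n + 1 - i₀) := mul_nonneg (hb0 _) (hf0 _)
  by_cases hnN : n ≤ N
  · have hs : #{k : Fin N | (k : ℕ) < n} = n := by rw [Fin.card_filter_val_lt, min_eq_right hnN]
    refine nthLargest_eq_of_mem_of_forall hs (i₀ := ⟨i₀ - 1, by omega⟩)
      (mem_filter.mpr ⟨mem_univ _, show i₀ - 1 < n by omega⟩) ?_ ?_ ?_
    · rw [Fin.val_mk, revPrefix_of_lt (by omega), Nat.sub_add_cancel hi₀1,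
        show n - 1 - (i₀ - 1) + 1 = n + 1 - i₀ by omega]
    · intro k hk
      have hk : (k : ℕ) < n := (mem_filter.mp hk).2
      have := hmin (k + 1) (mem_Icc.mpr ⟨by omega, by omega⟩)
      rw [revPrefix_of_lt hk, show n - 1 - k + 1 = n + 1 - (k + 1) by omega]
      gcongr
    · intro k hk
      have hk : n ≤ (k : ℕ) := by simpa using hk
      rw [revPrefix_of_le hk]
      have hk1 : (k : ℕ) + 1 ∈ Set.Ici 1 := Set.mem_Ici.mpr (by omega)
      exact pow_le_pow_left₀ (mul_nonneg (hb0 _) (hf0 _)) (mul_le_mul (hb (Set.mem_Ici.mpr hi₀1)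
        hk1 (by omega)) (hf (Set.mem_Ici.mpr (by omega)) hk1 (by omega)) (hf0 _) (hb0 _)) 2
  · have hm : b i₀ * f (n + 1 - i₀) = 0 := by
      refine le_antisymm ?_ hm0
      simpa [hbN n (by omega)] using hmin n (mem_Icc.mpr ⟨by omega, le_rfl⟩)
    rw [nthLargest, dif_neg (by omega), hm, sq, zero_mul]

lemma isLeast_pairProducts {N n i₀ : ℕ} {b f : ℕ → ℝ} (hnN : n ≤ N) (hi₀ : i₀ ∈ Icc 1 n)
    (hmin : ∀ i ∈ Icc 1 n, b i₀ * f (n + 1 - i₀) ≤ b i * f (n + 1 - i)) :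
    IsLeast {x : ℝ | ∃ i j : ℕ, 1 ≤ i ∧ i ≤ N ∧ 1 ≤ j ∧ j ≤ N ∧ i + j = n + 1 ∧ x = b i * f j}
      (b i₀ * f (n + 1 - i₀)) := by
  obtain ⟨hi₀1, hi₀n⟩ := mem_Icc.mp hi₀
  refine ⟨⟨i₀, n + 1 - i₀, by omega, by omega, by omega, by omega, by omega, rfl⟩, ?_⟩
  rintro x ⟨i, j, hi1, -, hj1, -, hij, rfl⟩
  obtain rfl : j = n + 1 - i := by omega
  exact hmin i (mem_Icc.mpr ⟨hi1, by omega⟩)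

theorem stmt12 {N_R N_S N_T : ℕ}
    (H_B : Matrix (Fin N_R) (Fin N_S) ℂ) (H_F : Matrix (Fin N_S) (Fin N_T) ℂ)
    -- singular value decompositions `H_B = U_B Σ_B V_Bᴴ` and `H_F = U_F Σ_F V_Fᴴ`,
    -- with the singular values in descending order on the diagonal:
    (U_B : Matrix (Fin N_R) (Fin N_R) ℂ) (V_B : Matrix (Fin N_S) (Fin N_S) ℂ)
    (U_F : Matrix (Fin N_S) (Fin N_S) ℂ) (V_F : Matrix (Fin N_T) (Fin N_T) ℂ)
    (hUB : U_Bᴴ * U_B = 1) (hVB : V_Bᴴ * V_B = 1)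
    (hUF : U_Fᴴ * U_F = 1) (hVF : V_Fᴴ * V_F = 1)
    (hB : H_B = U_B * (Matrix.of fun (i : Fin N_R) (j : Fin N_S) =>
      if (i : ℕ) = (j : ℕ) then ((singVal H_B ((i : ℕ) + 1) : ℝ) : ℂ) else 0) * V_Bᴴ)
    (hF : H_F = U_F * (Matrix.of fun (i : Fin N_S) (j : Fin N_T) =>
      if (i : ℕ) = (j : ℕ) then ((singVal H_F ((i : ℕ) + 1) : ℝ) : ℂ) else 0) * V_Fᴴ)
    (n : ℕ) (hn1 : 1 ≤ n) (hn2 : n ≤ N_S) :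
    ∃ (Θ : Matrix (Fin N_S) (Fin N_S) ℂ) (e : Equiv.Perm (Fin N_S)),
      Θ = V_B * e.permMatrix ℂ * U_Fᴴ ∧ Θᴴ * Θ = 1 ∧
      singVal (H_B * Θ * H_F) n =
        sInf {x : ℝ | ∃ i j : ℕ, 1 ≤ i ∧ i ≤ N_S ∧ 1 ≤ j ∧ j ≤ N_S ∧
          i + j = n + 1 ∧ x = singVal H_B i * singVal H_F j} := by
  set e := revPrefixPerm hn2
  set Θ := V_B * e.permMatrix ℂ * U_Fᴴ
  have hprod : H_B * Θ * H_F =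
      U_B * (rectDiag N_R N_S (singVal H_B) * e.permMatrix ℂ * rectDiag N_S N_T (singVal H_F)) *
        V_Fᴴ := by
    conv_lhs => rw [hB, hF]
    simp only [Θ, Matrix.mul_assoc]
    rw [← Matrix.mul_assoc V_Bᴴ, hVB, Matrix.one_mul, ← Matrix.mul_assoc U_Fᴴ, hUF, Matrix.one_mul]
    rfl
  have hgram : H_B * Θ * H_F * (H_B * Θ * H_F)ᴴ = U_B * diagonal (fun k : Fin N_R =>
      (((singVal H_B (k + 1) * singVal H_F (revPrefix n k + 1)) ^ 2 : ℝ) : ℂ)) * U_Bᴴ := by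
    rw [mul_conjTranspose_eq_of_eq_mul_mul hVF hprod, gram_rectDiag_mul_permMatrix_mul_rectDiag
      (fun k hk => singVal_eq_zero_of_cols_lt H_B (by omega))
      (fun k hk => singVal_eq_zero_of_cols_lt H_F (by omega)) e (revPrefixPerm_apply_val hn2)]
  obtain ⟨i₀, hi₀, hmin⟩ := (Icc 1 n).exists_min_image
    (fun i => singVal H_B i * singVal H_F (n + 1 - i)) (nonempty_Icc.mpr hn1)
  refine ⟨Θ, e, rfl, ?_, ?_⟩
  · refine mem_unitaryGroup_iff'.mp (mul_mem (mul_mem ?_ (permMatrix_mem_unitaryGroup e)) ?_)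
    · exact mem_unitaryGroup_iff'.mpr hVB
    · exact Unitary.star_mem (mem_unitaryGroup_iff'.mpr hUF)
  rw [singVal_eq_sqrt_nthLargest _ hUB hgram, nthLargest_sq_mul_revPrefix (singVal_antitoneOn H_B)
    (singVal_antitoneOn H_F) (singVal_nonneg H_B) (singVal_nonneg H_F)
    (fun k hk => singVal_eq_zero_of_rows_lt H_B hk) hi₀ hmin,
    Real.sqrt_sq (mul_nonneg (singVal_nonneg _ _) (singVal_nonneg _ _)),
    (isLeast_pairProducts hn2 hi₀ hmin).csInf_eq]
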